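/- Let f : ℝ^d → ℝ be twice continuously differentiable with μ·I ⪯ ∇²f(w) ⪯ L·I for all w, where 0 < μ ≤ L, and let w* be its unique minimizer. Let (H̃_k)_{k≥0} be symmetric d×d matrices with μ̃·I ⪯ H̃_k ⪯ L̃·I for all k, where 0 < μ̃ and L ≤ L̃ < ∞. Let w₀ ∈ ℝ^d and define w_{k+1} = w_k − α H̃_k⁻¹ g_k with constant step size 0 < α ≤ μ̃/L, where each g_k ∈ ℝ^d satisfies ‖g_k − ∇f(w_k)‖²_{H̃_k⁻¹} ≤ θ̃_g² ‖∇f(w_k)‖²_{H̃_k⁻¹} + ι_k with θ̃_g ∈ [0,1) and ι_k = ι₀ a_g^k for some ι₀ > 0 and a_g ∈ [0,1). Then for all k ≥ 0: f(w_k) − f(w*) ≤ C̃₁ ρ̃₁^k, where C̃₁ = max{ f(w₀) − f(w*), L̃ ι₀ / (μ(1 − θ̃_g²)) } and ρ̃₁ = max{ 1 − α μ (1 − θ̃_g²)/(2 L̃), a_g }. -/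

import Mathlib

/-!
The Hessian bounds give the quadratic upper bound `f (x + u) ≤ f x + ⟪∇f x, u⟫ + L/2 ‖u‖²` and,
from the lower bound, the Polyak–Łojasiewicz inequality. Writing `T = H̃⁻¹`, the step-size
condition `α L ≤ μ̃` makes the quadratic term of a step at most `α/2 ‖g‖²_T`, so one step gives
`f w⁺ ≤ f w - α/2 ‖∇f w‖²_T + α/2 ‖g - ∇f w‖²_T`. The gradient-error condition, `‖v‖² ≤ L̃ ‖v‖²_T`
and PL turn this into the contraction `D⁺ ≤ (1 - β) D + α/2 ι₀ a_gᵏ` of the suboptimality `D`,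
with `β = α μ (1 - θ̃²) / L̃`. The constant `C̃₁` is chosen so that the noise term is absorbed by
half of the contraction, `α/2 ι₀ ≤ β/2 C̃₁`, and induction gives `D_k ≤ C̃₁ ρ̃₁ᵏ`.
-/

open Finset Matrix
open scoped RealInnerProductSpace

noncomputable section

abbrev Vec (d : ℕ) := EuclideanSpace ℝ (Fin d)

/-- The continuous linear operator on Euclidean space associated with a matrix. -/
noncomputable def toOp {d : ℕ} (A : Matrix (Fin d) (Fin d) ℝ) : Vec d →L[ℝ] Vec d :=
  LinearMap.toContinuousLinearMap (Matrix.toEuclideanLin A)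

theorem le_add_deriv_add_half_of_deriv2_le {φ φ' φ'' : ℝ → ℝ} {K : ℝ}
    (hφ : ∀ t, HasDerivAt φ (φ' t) t) (hφ' : ∀ t, HasDerivAt φ' (φ'' t) t)
    (hK : ∀ t, φ'' t ≤ K) : φ 1 ≤ φ 0 + φ' 0 + K / 2 := by
  set ψ : ℝ → ℝ := fun t => φ t - K / 2 * t ^ 2
  have hψ : ∀ t, HasDerivAt ψ (φ' t - K * t) t := fun t =>
    ((hφ t).sub ((hasDerivAt_pow 2 t).const_mul (K / 2))).congr_deriv (by ring)
  have hanti : Antitone fun t => φ' t - K * t :=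
    antitone_of_hasDerivAt_nonpos (fun t => (hφ' t).sub ((hasDerivAt_id t).const_mul K))
      fun t => by simpa using hK t
  obtain ⟨ξ, hξ, hslope⟩ := exists_hasDerivAt_eq_slope ψ _ zero_lt_one
    (continuous_iff_continuousAt.2 fun t => (hψ t).continuousAt).continuousOn fun t _ => hψ t
  have := hanti hξ.1.le
  simp only [ψ] at hslope this
  norm_num at hslope this
  linarith

theorem add_deriv_add_half_le_of_le_deriv2 {φ φ' φ'' : ℝ → ℝ} {K : ℝ}
    (hφ : ∀ t, HasDerivAt φ (φ' t) t) (hφ' : ∀ t, HasDerivAt φ' (φ'' t) t)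
    (hK : ∀ t, K ≤ φ'' t) : φ 0 + φ' 0 + K / 2 ≤ φ 1 := by
  have := le_add_deriv_add_half_of_deriv2_le (fun t => (hφ t).neg) (fun t => (hφ' t).neg)
    fun t => neg_le_neg (hK t)
  simp only [Pi.neg_apply] at this
  linarith

section Quadratic

variable {E : Type*} [NormedAddCommGroup E] [InnerProductSpace ℝ E]
  {f : E → ℝ} {gradf : E → E} {Hf : E → E →L[ℝ] E}

theorem hasDerivAt_comp_line [CompleteSpace E] (hgrad : ∀ x, HasGradientAt f (gradf x) x)
    (x u : E) (t : ℝ) :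
    HasDerivAt (fun s : ℝ => f (x + s • u)) ⟪gradf (x + t • u), u⟫ t := by
  have hline : HasDerivAt (fun s : ℝ => x + s • u) u t := by
    simpa using ((hasDerivAt_id t).smul_const u).const_add x
  have := (hgrad (x + t • u)).hasFDerivAt.comp_hasDerivAt t hline
  simp only [InnerProductSpace.toDual_apply_apply] at this
  exact this

theorem hasDerivAt_inner_comp_line (hHf : ∀ x, HasFDerivAt gradf (Hf x) x) (x u : E) (t : ℝ) :
    HasDerivAt (fun s : ℝ => ⟪gradf (x + s • u), u⟫) ⟪Hf (x + t • u) u, u⟫ t := by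
  have hline : HasDerivAt (fun s : ℝ => x + s • u) u t := by
    simpa using ((hasDerivAt_id t).smul_const u).const_add x
  simpa using ((hHf (x + t • u)).comp_hasDerivAt t hline).inner ℝ (hasDerivAt_const t u)

variable [CompleteSpace E]

theorem le_add_inner_add_of_hessian_le (hgrad : ∀ x, HasGradientAt f (gradf x) x)
    (hHf : ∀ x, HasFDerivAt gradf (Hf x) x) {c : ℝ} (hub : ∀ x v, ⟪Hf x v, v⟫ ≤ c * ‖v‖ ^ 2)
    (x u : E) : f (x + u) ≤ f x + ⟪gradf x, u⟫ + c / 2 * ‖u‖ ^ 2 := by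
  have := le_add_deriv_add_half_of_deriv2_le (hasDerivAt_comp_line hgrad x u)
    (hasDerivAt_inner_comp_line hHf x u) fun t => hub _ u
  simp only [one_smul, zero_smul, add_zero] at this
  linarith

theorem add_inner_add_le_of_le_hessian (hgrad : ∀ x, HasGradientAt f (gradf x) x)
    (hHf : ∀ x, HasFDerivAt gradf (Hf x) x) {c : ℝ} (hlb : ∀ x v, c * ‖v‖ ^ 2 ≤ ⟪Hf x v, v⟫)
    (x u : E) : f x + ⟪gradf x, u⟫ + c / 2 * ‖u‖ ^ 2 ≤ f (x + u) := by
  have := add_deriv_add_half_le_of_le_deriv2 (hasDerivAt_comp_line hgrad x u)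
    (hasDerivAt_inner_comp_line hHf x u) fun t => hlb _ u
  simp only [one_smul, zero_smul, add_zero] at this
  linarith

theorem polyakLojasiewicz_of_le_hessian (hgrad : ∀ x, HasGradientAt f (gradf x) x)
    (hHf : ∀ x, HasFDerivAt gradf (Hf x) x) {μ : ℝ} (hμ : 0 < μ)
    (hlb : ∀ x v, μ * ‖v‖ ^ 2 ≤ ⟪Hf x v, v⟫) (x y : E) :
    2 * μ * (f x - f y) ≤ ‖gradf x‖ ^ 2 := by
  have hquad := add_inner_add_le_of_le_hessian hgrad hHf hlb x (y - x)
  rw [add_sub_cancel] at hquad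
  have hcs := neg_le_of_abs_le (abs_real_inner_le_norm (gradf x) (y - x))
  nlinarith [sq_nonneg (‖gradf x‖ - μ * ‖y - x‖)]

end Quadratic

theorem le_of_forall_mul_norm_sq_le_le {E : Type*} [NormedAddCommGroup E] [Nontrivial E]
    {Q : E → ℝ} {a b : ℝ}
    (hlb : ∀ v, a * ‖v‖ ^ 2 ≤ Q v) (hub : ∀ v, Q v ≤ b * ‖v‖ ^ 2) : a ≤ b := by
  obtain ⟨v, hv⟩ := exists_ne (0 : E)
  exact le_of_mul_le_mul_right ((hlb v).trans (hub v)) (by positivity)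

section Preconditioner

variable {E : Type*} [NormedAddCommGroup E] [InnerProductSpace ℝ E] {S T : E →L[ℝ] E}

theorem injective_of_mul_norm_sq_le_inner {μ : ℝ} (hμ : 0 < μ)
    (hlb : ∀ v, μ * ‖v‖ ^ 2 ≤ ⟪S v, v⟫) : Function.Injective S := fun u v huv => by
  have := hlb (u - v)
  rw [map_sub, huv, sub_self, inner_zero_left] at this
  have : ‖u - v‖ ^ 2 ≤ 0 := by nlinarith
  simpa [sub_eq_zero] using this

theorem isSymmetric_of_rightInverse (hS : (S : E →ₗ[ℝ] E).IsSymmetric)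
    (hST : ∀ v, S (T v) = v) : (T : E →ₗ[ℝ] E).IsSymmetric := fun u v =>
  calc ⟪T u, v⟫ = ⟪T u, S (T v)⟫ := by rw [hST]
    _ = ⟪S (T u), T v⟫ := (hS _ _).symm
    _ = ⟪u, T v⟫ := by rw [hST]

theorem mul_norm_sq_le_inner_of_rightInverse {μ : ℝ} (hlb : ∀ v, μ * ‖v‖ ^ 2 ≤ ⟪S v, v⟫)
    (hST : ∀ v, S (T v) = v) (v : E) : μ * ‖T v‖ ^ 2 ≤ ⟪T v, v⟫ := by
  simpa [hST, real_inner_comm] using hlb (T v)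

theorem norm_sq_le_mul_inner_of_le (hS : (S : E →ₗ[ℝ] E).IsSymmetric) (hpos : ∀ v, 0 ≤ ⟪S v, v⟫)
    {L : ℝ} (hL : 0 < L) (hub : ∀ v, ⟪S v, v⟫ ≤ L * ‖v‖ ^ 2) (u : E) :
    ‖S u‖ ^ 2 ≤ L * ⟪S u, u⟫ := by
  -- `L (L S - S²) = (L - S) S (L - S) + S (L - S) S`, a sum of two positive operators
  have hsplit : L * (L * ⟪S u, u⟫ - ‖S u‖ ^ 2) =
      ⟪S (L • u - S u), L • u - S u⟫ + (L * ‖S u‖ ^ 2 - ⟪S (S u), S u⟫) := by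
    have hSS : ⟪S (S u), u⟫ = ⟪S u, S u⟫ := hS (S u) u
    simp only [map_sub, map_smul, inner_sub_left, inner_sub_right, real_inner_smul_left,
      real_inner_smul_right, hSS, real_inner_comm u (S u), real_inner_self_eq_norm_sq]
    ring
  nlinarith [hpos (L • u - S u), hub (S u)]

theorem norm_sq_le_mul_inner_of_rightInverse (hS : (S : E →ₗ[ℝ] E).IsSymmetric)
    (hpos : ∀ v, 0 ≤ ⟪S v, v⟫) {L : ℝ} (hL : 0 < L) (hub : ∀ v, ⟪S v, v⟫ ≤ L * ‖v‖ ^ 2)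
    (hST : ∀ v, S (T v) = v) (v : E) : ‖v‖ ^ 2 ≤ L * ⟪T v, v⟫ := by
  simpa [hST, real_inner_comm] using norm_sq_le_mul_inner_of_le hS hpos hL hub (T v)

variable {f : E → ℝ} {gradf : E → E} {L μt α : ℝ}

theorem preconditioned_step_descent
    (hsmooth : ∀ x u, f (x + u) ≤ f x + ⟪gradf x, u⟫ + L / 2 * ‖u‖ ^ 2)
    (hT : (T : E →ₗ[ℝ] E).IsSymmetric) (hTlb : ∀ v, μt * ‖T v‖ ^ 2 ≤ ⟪T v, v⟫)
    (hα : 0 ≤ α) (hαL : α * L ≤ μt) (x q : E) :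
    f (x - α • T q) ≤ f x - α / 2 * ⟪T (gradf x), gradf x⟫
      + α / 2 * ⟪T (q - gradf x), q - gradf x⟫ := by
  have hquad := hsmooth x (-(α • T q))
  rw [← sub_eq_add_neg, inner_neg_right, real_inner_smul_right, norm_neg, norm_smul,
    Real.norm_eq_abs, abs_of_nonneg hα, mul_pow] at hquad
  have hsq : L / 2 * (α ^ 2 * ‖T q‖ ^ 2) ≤ α / 2 * ⟪T q, q⟫ := by
    have := mul_le_mul_of_nonneg_left (hTlb q) hα
    nlinarith [mul_le_mul_of_nonneg_right hαL (mul_nonneg hα (sq_nonneg ‖T q‖))]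
  have hpolar : ⟪T (q - gradf x), q - gradf x⟫
      = ⟪T q, q⟫ - 2 * ⟪gradf x, T q⟫ + ⟪T (gradf x), gradf x⟫ := by
    have hsym : ⟪T (gradf x), q⟫ = ⟪gradf x, T q⟫ := hT (gradf x) q
    rw [map_sub, inner_sub_left, inner_sub_right, inner_sub_right, real_inner_comm (gradf x),
      hsym]
    ring
  rw [hpolar]
  linarith

theorem preconditioned_step_contraction {Lt θ ι : ℝ}
    (hsmooth : ∀ x u, f (x + u) ≤ f x + ⟪gradf x, u⟫ + L / 2 * ‖u‖ ^ 2)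
    {μ : ℝ} (hPL : ∀ x y, 2 * μ * (f x - f y) ≤ ‖gradf x‖ ^ 2)
    (hT : (T : E →ₗ[ℝ] E).IsSymmetric) (hTlb : ∀ v, μt * ‖T v‖ ^ 2 ≤ ⟪T v, v⟫)
    (hTub : ∀ v, ‖v‖ ^ 2 ≤ Lt * ⟪T v, v⟫) (hLt : 0 < Lt)
    (hα : 0 ≤ α) (hαL : α * L ≤ μt) (hθ : θ ^ 2 ≤ 1) (x q y : E)
    (herr : ⟪T (q - gradf x), q - gradf x⟫ ≤ θ ^ 2 * ⟪T (gradf x), gradf x⟫ + ι) :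
    f (x - α • T q) - f y ≤ (1 - α * μ * (1 - θ ^ 2) / Lt) * (f x - f y) + α / 2 * ι := by
  have hstep := preconditioned_step_descent hsmooth hT hTlb hα hαL x q
  have hgap : μ * (f x - f y) / Lt ≤ ⟪T (gradf x), gradf x⟫ / 2 := by
    rw [div_le_iff₀ hLt]
    linarith [hPL x y, hTub (gradf x)]
  have hcoef : 0 ≤ α * (1 - θ ^ 2) := mul_nonneg hα (by linarith)
  have := mul_le_mul_of_nonneg_left hgap hcoef
  have := mul_le_mul_of_nonneg_left herr (by linarith : 0 ≤ α / 2)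
  calc f (x - α • T q) - f y
      ≤ (f x - f y) - α * (1 - θ ^ 2) * (⟪T (gradf x), gradf x⟫ / 2) + α / 2 * ι := by linarith
    _ ≤ (f x - f y) - α * (1 - θ ^ 2) * (μ * (f x - f y) / Lt) + α / 2 * ι := by linarith
    _ = (1 - α * μ * (1 - θ ^ 2) / Lt) * (f x - f y) + α / 2 * ι := by ring

end Preconditioner

theorem le_mul_pow_of_le_contraction {D : ℕ → ℝ} {β γ a C ρ : ℝ} (hβ : β ≤ 1) (hγ : 0 ≤ γ)
    (ha : 0 ≤ a) (hstep : ∀ n, D (n + 1) ≤ (1 - β) * D n + γ * a ^ n) (hD : D 0 ≤ C)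
    (hγC : γ ≤ β / 2 * C) (hρβ : 1 - β / 2 ≤ ρ) (hρa : a ≤ ρ) (hC : 0 ≤ C) :
    ∀ n, D n ≤ C * ρ ^ n
  | 0 => by simpa using hD
  | n + 1 => by
    have ih := le_mul_pow_of_le_contraction hβ hγ ha hstep hD hγC hρβ hρa hC n
    have hpow : a ^ n ≤ ρ ^ n := pow_le_pow_left₀ ha hρa n
    have hρn : 0 ≤ ρ ^ n := (pow_nonneg ha n).trans hpow
    calc D (n + 1) ≤ (1 - β) * (C * ρ ^ n) + β / 2 * C * ρ ^ n := by
          nlinarith [hstep n, mul_le_mul_of_nonneg_left ih (sub_nonneg.2 hβ),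
            mul_le_mul_of_nonneg_left hpow hγ, mul_le_mul_of_nonneg_right hγC hρn]
      _ = (1 - β / 2) * C * ρ ^ n := by ring
      _ ≤ ρ * C * ρ ^ n := by gcongr
      _ = C * ρ ^ (n + 1) := by ring

section Matrix

variable {d : ℕ} {A : Matrix (Fin d) (Fin d) ℝ}

theorem isSymmetric_toOp (hA : A.IsSymm) : (toOp A : Vec d →ₗ[ℝ] Vec d).IsSymmetric :=
  Matrix.isSymmetric_toEuclideanLin_iff.2 <| by
    rw [Matrix.IsHermitian, Matrix.conjTranspose_eq_transpose_of_trivial]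
    exact hA

theorem isUnit_of_mul_norm_sq_le_inner_toOp {μ : ℝ} (hμ : 0 < μ)
    (hlb : ∀ v, μ * ‖v‖ ^ 2 ≤ ⟪toOp A v, v⟫) : IsUnit A :=
  mulVec_injective_iff_isUnit.1 fun x y hxy => by
    simpa using injective_of_mul_norm_sq_le_inner hμ hlb
      (a₁ := WithLp.toLp 2 x) (a₂ := WithLp.toLp 2 y) (by simp [toOp, hxy])

theorem toOp_apply_toOp_inv (hA : IsUnit A) (v : Vec d) : toOp A (toOp A⁻¹ v) = v := by
  simp [toOp, toLpLin_apply, mulVec_mulVec, mul_nonsing_inv _ ((isUnit_iff_isUnit_det A).1 hA)]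

end Matrix

theorem global_linear_convergence_deterministic_general {d : ℕ}
    (L μ μt Lt α θg a_g ι₀ : ℝ)
    (hL : 0 < L) (hμ : 0 < μ) (hμL : μ ≤ L) (hμt : 0 < μt) (hLt : L ≤ Lt)
    (f : Vec d → ℝ) (gradf : Vec d → Vec d) (Hf : Vec d → (Vec d →L[ℝ] Vec d))
    (hgrad : ∀ x, HasGradientAt f (gradf x) x)
    (hHf : ∀ x, HasFDerivAt gradf (Hf x) x)
    (hHub : ∀ x (v : Vec d), ⟪Hf x v, v⟫ ≤ L * ‖v‖ ^ 2)
    (hHlb : ∀ x (v : Vec d), μ * ‖v‖ ^ 2 ≤ ⟪Hf x v, v⟫)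
    (wstar : Vec d)
    (Ht : ℕ → Matrix (Fin d) (Fin d) ℝ)
    (hHtsym : ∀ k, (Ht k).IsSymm)
    (hHtlb : ∀ k (v : Vec d), μt * ‖v‖ ^ 2 ≤ ⟪toOp (Ht k) v, v⟫)
    (hHtub : ∀ k (v : Vec d), ⟪toOp (Ht k) v, v⟫ ≤ Lt * ‖v‖ ^ 2)
    (w g : ℕ → Vec d) (hα0 : 0 < α) (hα : α ≤ μt / L)
    (hiter : ∀ k, w (k + 1) = w k - α • toOp (Ht k)⁻¹ (g k))
    (hθg : θg ∈ Set.Ico (0 : ℝ) 1) (hι₀ : 0 < ι₀) (hag : a_g ∈ Set.Ico (0 : ℝ) 1)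
    (hnorm : ∀ k, ⟪toOp (Ht k)⁻¹ (g k - gradf (w k)), g k - gradf (w k)⟫ ≤
      θg ^ 2 * ⟪toOp (Ht k)⁻¹ (gradf (w k)), gradf (w k)⟫ + ι₀ * a_g ^ k) :
    ∀ k, f (w k) - f wstar ≤
      max (f (w 0) - f wstar) (Lt * ι₀ / (μ * (1 - θg ^ 2))) *
        (max (1 - α * μ * (1 - θg ^ 2) / (2 * Lt)) a_g) ^ k := by
  obtain ⟨hθ0, hθ1⟩ := hθg
  have hθ : 0 < 1 - θg ^ 2 := by nlinarith
  have hLt0 : 0 < Lt := hL.trans_le hLt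
  have hC : 0 < Lt * ι₀ / (μ * (1 - θg ^ 2)) := by positivity
  -- on the zero space the bounds on `Ht` do not force `μt ≤ Lt`
  rcases subsingleton_or_nontrivial (Vec d) with hd | hd
  · intro k
    rw [Subsingleton.elim (w k) wstar, sub_self]
    exact mul_nonneg (hC.le.trans (le_max_right _ _))
      (pow_nonneg (hag.1.trans (le_max_right _ _)) k)
  have hαL : α * L ≤ μt := (le_div_iff₀ hL).1 hα
  have hμtLt : μt ≤ Lt := le_of_forall_mul_norm_sq_le_le (hHtlb 0) (hHtub 0)
  have hinv k := toOp_apply_toOp_inv (isUnit_of_mul_norm_sq_le_inner_toOp hμt (hHtlb k))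
  have hpos k v : 0 ≤ ⟪toOp (Ht k) v, v⟫ := le_trans (by positivity) (hHtlb k v)
  refine le_mul_pow_of_le_contraction (β := α * μ * (1 - θg ^ 2) / Lt) (γ := α / 2 * ι₀)
    ?_ (by positivity) hag.1 (fun k => ?_) (le_max_left _ _) ?_ ?_ (le_max_right _ _)
    (hC.le.trans (le_max_right _ _))
  · rw [div_le_one hLt0]
    nlinarith [mul_le_mul_of_nonneg_left hμL hα0.le]
  · rw [hiter k, mul_assoc (α / 2)]
    exact preconditioned_step_contraction (le_add_inner_add_of_hessian_le hgrad hHf hHub)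
      (polyakLojasiewicz_of_le_hessian hgrad hHf hμ hHlb)
      (isSymmetric_of_rightInverse (isSymmetric_toOp (hHtsym k)) (hinv k))
      (mul_norm_sq_le_inner_of_rightInverse (hHtlb k) (hinv k))
      (norm_sq_le_mul_inner_of_rightInverse (isSymmetric_toOp (hHtsym k)) (hpos k) hLt0
        (hHtub k) (hinv k)) hLt0 hα0.le hαL (by linarith) _ _ wstar (hnorm k)
  · calc α / 2 * ι₀ = α * μ * (1 - θg ^ 2) / Lt / 2 * (Lt * ι₀ / (μ * (1 - θg ^ 2))) := by
          field_simp
      _ ≤ _ := by gcongr; exact le_max_right _ _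
  · exact le_of_eq_of_le (by ring) (le_max_left _ _)

/-- Global linear convergence with deterministic adaptive gradient
sampling for strongly convex functions. -/
theorem global_linear_convergence_deterministic {d : ℕ}
    (L μ μt Lt α θg a_g ι₀ : ℝ)
    (hL : 0 < L) (hμ : 0 < μ) (hμL : μ ≤ L) (hμt : 0 < μt) (hLt : L ≤ Lt)
    (f : Vec d → ℝ) (gradf : Vec d → Vec d) (Hf : Vec d → (Vec d →L[ℝ] Vec d))
    (hsmooth : ContDiff ℝ 2 f)
    (hgrad : ∀ x, HasGradientAt f (gradf x) x)
    (hHf : ∀ x, HasFDerivAt gradf (Hf x) x)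
    (hHub : ∀ x (v : Vec d), ⟪Hf x v, v⟫ ≤ L * ‖v‖ ^ 2)
    (hHlb : ∀ x (v : Vec d), μ * ‖v‖ ^ 2 ≤ ⟪Hf x v, v⟫)
    (wstar : Vec d) (hmin : ∀ x, f wstar ≤ f x)
    (huniq : ∀ x, (∀ y, f x ≤ f y) → x = wstar)
    (Ht : ℕ → Matrix (Fin d) (Fin d) ℝ)
    (hHtsym : ∀ k, (Ht k).IsSymm)
    (hHtlb : ∀ k (v : Vec d), μt * ‖v‖ ^ 2 ≤ ⟪toOp (Ht k) v, v⟫)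
    (hHtub : ∀ k (v : Vec d), ⟪toOp (Ht k) v, v⟫ ≤ Lt * ‖v‖ ^ 2)
    (w g : ℕ → Vec d) (hα0 : 0 < α) (hα : α ≤ μt / L)
    (hiter : ∀ k, w (k + 1) = w k - α • toOp (Ht k)⁻¹ (g k))
    (hθg : θg ∈ Set.Ico (0 : ℝ) 1) (hι₀ : 0 < ι₀) (hag : a_g ∈ Set.Ico (0 : ℝ) 1)
    (hnorm : ∀ k, ⟪toOp (Ht k)⁻¹ (g k - gradf (w k)), g k - gradf (w k)⟫ ≤
      θg ^ 2 * ⟪toOp (Ht k)⁻¹ (gradf (w k)), gradf (w k)⟫ + ι₀ * a_g ^ k) :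
    ∀ k, f (w k) - f wstar ≤
      max (f (w 0) - f wstar) (Lt * ι₀ / (μ * (1 - θg ^ 2))) *
        (max (1 - α * μ * (1 - θg ^ 2) / (2 * Lt)) a_g) ^ k :=
  global_linear_convergence_deterministic_general L μ μt Lt α θg a_g ι₀ hL hμ hμL hμt hLt f gradf Hf
    hgrad hHf hHub hHlb wstar Ht hHtsym hHtlb hHtub w g hα0 hα hiter hθg hι₀ hag hnorm
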